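/- Every conformal superderivation of the loop super-Virasoro conformal superalgebra 𝔠𝔩𝔰 is inner: CDer(𝔠𝔩𝔰) = CInn(𝔠𝔩𝔰). -/

import Mathlib

open Polynomial

/-- Substitution `∂ ↦ ∂ + λ`. -/
noncomputable def sh (l : ℂ) (f : Polynomial ℂ) : Polynomial ℂ :=
  f.comp (Polynomial.X + Polynomial.C l)

/-- The loop super-Virasoro conformal superalgebra
`𝔠𝔩𝔰 = (⊕_{i∈ℤ}ℂ[∂]L_i) ⊕ (⊕_{i∈ℤ}ℂ[∂]G_i)` as a `ℂ[∂]`-module: the first component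
records the coefficients of the (even) `L_i`, the second those of the (odd) `G_i`. -/
abbrev CLS := (ℤ →₀ Polynomial ℂ) × (ℤ →₀ Polynomial ℂ)

/-- The action of `∂` on `𝔠𝔩𝔰`. -/
noncomputable def dC (u : CLS) : CLS :=
  (u.1.mapRange (fun f => Polynomial.X * f) (mul_zero _),
   u.2.mapRange (fun f => Polynomial.X * f) (mul_zero _))

/-- The `λ`-bracket of `𝔠𝔩𝔰`, determined by `[L_i ₗ L_j] = (∂+2λ)L_{i+j}`,
`[L_i ₗ G_j] = (∂+(3/2)λ)G_{i+j}`, `[G_i ₗ L_j] = ((1/2)∂+(3/2)λ)G_{i+j}`,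
`[G_i ₗ G_j] = 2L_{i+j}` and sesquilinearity
`[f(∂)a ₗ g(∂)b] = f(-λ)g(∂+λ)[a ₗ b]`. -/
noncomputable def br (l : ℂ) (u v : CLS) : CLS :=
  (u.1.sum (fun i f => v.1.sum fun j g =>
      Finsupp.single (i+j)
        (Polynomial.C (f.eval (-l)) * sh l g * (Polynomial.X + Polynomial.C (2*l))))
    + u.2.sum (fun i f => v.2.sum fun j g =>
      Finsupp.single (i+j) (Polynomial.C (2 * f.eval (-l)) * sh l g)),
   u.1.sum (fun i f => v.2.sum fun j g =>
      Finsupp.single (i+j)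
        (Polynomial.C (f.eval (-l)) * sh l g * (Polynomial.X + Polynomial.C ((3/2)*l))))
    + u.2.sum (fun i f => v.1.sum fun j g =>
      Finsupp.single (i+j)
        (Polynomial.C (f.eval (-l)) * sh l g *
          (Polynomial.C (1/2) * Polynomial.X + Polynomial.C ((3/2)*l)))))

/-- `D` is an even conformal superderivation of `𝔠𝔩𝔰`: parity-preserving, `ℂ`-linear,
polynomial in `λ`, with `D_λ(∂a) = (∂+λ)D_λ a` and
`D_λ[a_μ b] = [(D_λ a)_{λ+μ} b] + [a_μ (D_λ b)]`. -/
def IsEvenCDer (D : ℂ → CLS →ₗ[ℂ] CLS) : Prop :=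
  (∀ (l : ℂ) (u : CLS), (u.2 = 0 → (D l u).2 = 0) ∧ (u.1 = 0 → (D l u).1 = 0)) ∧
  (∀ u : CLS, ∃ (N : ℕ) (w : ℕ → CLS), ∀ l : ℂ,
      D l u = ∑ k ∈ Finset.range N, l ^ k • w k) ∧
  (∀ (l : ℂ) (u : CLS), D l (dC u) = dC (D l u) + l • D l u) ∧
  (∀ (l m : ℂ) (u v : CLS), D l (br m u v) = br (l+m) (D l u) v + br m u (D l v))

/-- `D` is an odd conformal superderivation of `𝔠𝔩𝔰`: parity-reversing, `ℂ`-linear,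
polynomial in `λ`, with `D_λ(∂a) = (∂+λ)D_λ a` and, for `ℤ₂`-homogeneous `a`,
`D_λ[a_μ b] = [(D_λ a)_{λ+μ} b] + (−1)^{|a|}[a_μ (D_λ b)]`. -/
def IsOddCDer (D : ℂ → CLS →ₗ[ℂ] CLS) : Prop :=
  (∀ (l : ℂ) (u : CLS), (u.2 = 0 → (D l u).1 = 0) ∧ (u.1 = 0 → (D l u).2 = 0)) ∧
  (∀ u : CLS, ∃ (N : ℕ) (w : ℕ → CLS), ∀ l : ℂ,
      D l u = ∑ k ∈ Finset.range N, l ^ k • w k) ∧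
  (∀ (l : ℂ) (u : CLS), D l (dC u) = dC (D l u) + l • D l u) ∧
  (∀ (l m : ℂ) (u v : CLS),
      (u.2 = 0 → D l (br m u v) = br (l+m) (D l u) v + br m u (D l v))
    ∧ (u.1 = 0 → D l (br m u v) = br (l+m) (D l u) v - br m u (D l v)))


/-!
Since `L₀` is even, the Leibniz rule `D_λ [L₀ _μ b] = [(D_λ L₀)_{λ+μ} b] + [L₀ _μ (D_λ b)]` has the
same form for even and odd `D`, and together with `D_λ ∂ = (∂ + λ) D_λ` and polynomiality in `λ`
it already forces `D = ad_x`; then `x₀ + x₁` works for `D₀ + D₁`.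

Fix `λ ≠ 0`. For `b = L₀`, `μ = 0` the rule reads `λ D_λ L₀ = [(D_λ L₀)_λ L₀]`, so the `L_k`- and
`G_k`-coefficients of `D_λ L₀` are `c_k(λ) (∂ + 2λ)` and `d_k(λ) (½∂ + 3/2 λ)`. As `D_λ L₀` is
polynomial in `λ`, so are `c_k` and `d_k`, and `x = Σ c_k(-∂) L_k + d_k(-∂) G_k` satisfies
`D_λ L₀ = [x_λ L₀]`. For `b = L_j` or `G_j` the rule is a linear functional equation in `μ` and `∂`
for `D_λ b`; specializing `∂` to the root `-αμ` of the factor `∂ + αμ` (`α = 2` or `3/2`) in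
`[L₀ _μ ·]` shows that it has at most one solution, and `[x_λ b]` is one by the Jacobi identity.
Both `D_λ` and `[x_λ ·]` turn `∂` into `∂ + λ`, so they agree on all of `𝔠𝔩𝔰`, and continuity in
`λ` gives the case `λ = 0`.
-/

theorem Finsupp.sum_single_add_right_apply {α M N : Type*} [AddCommGroup α] [Zero M]
    [AddCommMonoid N] (w : α →₀ M) (j k : α) (φ : M → N) (hφ : φ 0 = 0) :
    (w.sum fun i f => Finsupp.single (i + j) (φ f)) k = φ (w (k - j)) := by
  classical
  simp only [Finsupp.sum_apply, Finsupp.single_apply, ← eq_sub_iff_add_eq, Finsupp.sum_ite_eq']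
  split_ifs with h
  · rfl
  · rw [Finsupp.notMem_support_iff.mp h, hφ]

theorem Finsupp.sum_single_add_left_apply {α M N : Type*} [AddCommGroup α] [Zero M]
    [AddCommMonoid N] (w : α →₀ M) (i k : α) (φ : M → N) (hφ : φ 0 = 0) :
    (w.sum fun j f => Finsupp.single (i + j) (φ f)) k = φ (w (k - i)) := by
  simpa only [add_comm i] using w.sum_single_add_right_apply i k φ hφ

@[simp] lemma eval_sh (l z : ℂ) (f : ℂ[X]) : (sh l f).eval z = f.eval (z + l) := by
  simp [sh, eval_comp]

lemma sh_zero (l : ℂ) : sh l 0 = 0 := zero_comp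

lemma sh_one (l : ℂ) : sh l 1 = 1 := one_comp

lemma sh_add (l : ℂ) (f g : ℂ[X]) : sh l (f + g) = sh l f + sh l g := add_comp

lemma sh_sub (l : ℂ) (f g : ℂ[X]) : sh l (f - g) = sh l f - sh l g := sub_comp

lemma sh_mul (l : ℂ) (f g : ℂ[X]) : sh l (f * g) = sh l f * sh l g := mul_comp _ _ _

lemma sh_C (l a : ℂ) : sh l (C a) = C a := C_comp

lemma sh_X (l : ℂ) : sh l X = X + C l := X_comp

lemma eq_zero_of_forall_mul_eq_sh_mul {p : ℂ[X]} {l α β : ℂ} (hl : l ≠ 0)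
    (hα : α ≠ 0) (h : ∀ m, (X + C (l + β * m)) * p = sh m p * (X + C (α * m))) : p = 0 := by
  -- at `∂ = -αμ` the right-hand side vanishes
  have hvanish : (C (1 - β / α) * X + C l) * p = 0 := Polynomial.funext fun w => by
    have hw := congrArg (eval w) (h (-w / α))
    simp only [eval_mul, eval_add, eval_X, eval_C, eval_sh] at hw
    field_simp at hw
    simp only [eval_mul, eval_add, eval_X, eval_C, eval_zero]
    field_simp
    linear_combination hw
  refine (mul_eq_zero.mp hvanish).resolve_left fun h0 => hl ?_
  simpa using congrArg (eval 0) h0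

lemma Polynomial.eq_C_coeff_one_div_mul {K : Type*} [Field K] {a q : K[X]} {l c : K} (hl : l ≠ 0)
    (hq : q.coeff 1 ≠ 0) (h : C l * a = C c * q) : a = C (a.coeff 1 / q.coeff 1) * q := by
  obtain rfl : a = C (c / l) * q := by
    apply mul_left_cancel₀ (C_ne_zero.mpr hl)
    rw [h, ← mul_assoc, ← C_mul, mul_div_cancel₀ _ hl]
  rw [coeff_C_mul, mul_div_cancel_right₀ _ hq]

lemma exists_eval_neg_eq {R M α : Type*} [CommRing R] [AddCommGroup M] [Module R M]
    (φ : M →ₗ[R] α →₀ R) {v : R → M} {N : ℕ} {w : ℕ → M}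
    (hv : ∀ l, v l = ∑ t ∈ Finset.range N, l ^ t • w t) :
    ∃ F : α →₀ R[X], ∀ l a, (F a).eval (-l) = φ (v l) a := by
  refine ⟨∑ t ∈ Finset.range N, (φ (w t)).mapRange (fun c => C c * (-X) ^ t) (by simp),
    fun l a => ?_⟩
  simp [hv, Finsupp.finsetSum_apply, eval_finsetSum, mul_comm]

namespace CLS

noncomputable def L (j : ℤ) : CLS := (Finsupp.single j 1, 0)

noncomputable def G (j : ℤ) : CLS := (0, Finsupp.single j 1)

@[simp] lemma dC_fst_apply (u : CLS) (k : ℤ) : (dC u).1 k = X * u.1 k := by simp [dC]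

@[simp] lemma dC_snd_apply (u : CLS) (k : ℤ) : (dC u).2 k = X * u.2 k := by simp [dC]

lemma dC_eq_X_smul (u : CLS) : dC u = (X : ℂ[X]) • u := by
  ext <;> simp

lemma C_smul (a : ℂ) (u : CLS) : (C a : ℂ[X]) • u = a • u := by
  ext <;> simp [smul_eq_C_mul]

theorem induction_on {S : CLS → Prop} (hadd : ∀ u v, S u → S v → S (u + v))
    (hsmul : ∀ (p : ℂ[X]) u, S u → S (p • u)) (hL : ∀ j, S (L j)) (hG : ∀ j, S (G j))
    (v : CLS) : S v := by
  have h0 : S 0 := by simpa using hsmul 0 _ (hL 0)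
  have hfst : ∀ w, S (w, 0) := fun w => by
    induction w using Finsupp.induction_linear with
    | zero => exact h0
    | add f g hf hg => simpa using hadd _ _ hf hg
    | single j p => simpa [L] using hsmul p _ (hL j)
  have hsnd : ∀ w, S (0, w) := fun w => by
    induction w using Finsupp.induction_linear with
    | zero => exact h0
    | add f g hf hg => simpa using hadd _ _ hf hg
    | single j p => simpa [G] using hsmul p _ (hG j)
  simpa using hadd _ _ (hfst v.1) (hsnd v.2)

noncomputable def coord (k : ℤ) (z : ℂ) : CLS →ₗ[ℂ] ℂ × ℂ :=
  (leval z ∘ₗ Finsupp.lapply k).prodMap (leval z ∘ₗ Finsupp.lapply k)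

@[simp] lemma coord_apply (k : ℤ) (z : ℂ) (u : CLS) :
    coord k z u = ((u.1 k).eval z, (u.2 k).eval z) := rfl

lemma ext_coord {u v : CLS} (h : ∀ k z, coord k z u = coord k z v) : u = v :=
  Prod.ext (Finsupp.ext fun k => Polynomial.funext fun z => congrArg Prod.fst (h k z))
    (Finsupp.ext fun k => Polynomial.funext fun z => congrArg Prod.snd (h k z))

lemma continuous_coord_of_eq_sum {f : ℂ → CLS} {N : ℕ} {w : ℕ → CLS}
    (hf : ∀ l, f l = ∑ t ∈ Finset.range N, l ^ t • w t) (k : ℤ) (z : ℂ) :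
    Continuous fun l => coord k z (f l) := by
  simp only [hf, map_sum, map_smul]
  fun_prop

lemma eq_of_forall_ne_zero {f g : ℂ → CLS} (hf : ∀ k z, Continuous fun l => coord k z (f l))
    (hg : ∀ k z, Continuous fun l => coord k z (g l)) (h : ∀ l ≠ 0, f l = g l) (l : ℂ) :
    f l = g l :=
  ext_coord fun k z => congrFun ((hf k z).ext_on (dense_compl_singleton 0) (hg k z)
    fun l hl => congrArg (coord k z) (h l hl)) l

lemma br_add_left (l : ℂ) (u v w : CLS) : br l (u + v) w = br l u w + br l v w := by
  simp only [br, Prod.fst_add, Prod.snd_add, Prod.mk_add_mk, eval_zero, eval_add, C_0, C_add,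
    mul_zero, zero_mul, mul_add, add_mul, Finsupp.single_zero, Finsupp.single_add,
    Finsupp.sum_add_index', Finsupp.sum_add, Finsupp.sum_fun_zero, implies_true, Prod.mk.injEq]
  constructor <;> abel

lemma br_add_right (l : ℂ) (u v w : CLS) : br l u (v + w) = br l u v + br l u w := by
  simp only [br, Prod.fst_add, Prod.snd_add, Prod.mk_add_mk, sh_zero, sh_add, mul_zero, zero_mul,
    mul_add, add_mul, Finsupp.single_zero, Finsupp.single_add, Finsupp.sum_add_index',
    Finsupp.sum_add, implies_true, Prod.mk.injEq]
  constructor <;> abel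

lemma br_smul_right (l : ℂ) (p : ℂ[X]) (u v : CLS) : br l u (p • v) = sh l p • br l u v := by
  simp only [br, Prod.smul_fst, Prod.smul_snd, Prod.smul_mk, sh_zero, sh_mul, mul_zero, zero_mul,
    Finsupp.single_zero, Finsupp.sum_smul_index', implies_true, smul_add, Finsupp.smul_sum,
    Finsupp.smul_single, smul_eq_mul]
  refine Prod.ext (congrArg₂ (· + ·) ?_ ?_) (congrArg₂ (· + ·) ?_ ?_) <;>
    exact Finsupp.sum_congr fun _ _ => Finsupp.sum_congr fun _ _ => congrArg _ (by ring)

lemma continuous_coord_br (x u : CLS) (k : ℤ) (z : ℂ) :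
    Continuous fun l => coord k z (br l x u) := by
  simp only [coord_apply, br, Finsupp.sum, Finsupp.add_apply, Finsupp.finsetSum_apply,
    Finsupp.single_apply, eval_add, eval_finsetSum, apply_ite (eval z), eval_zero, eval_mul,
    eval_C, eval_sh, eval_X]
  refine .prodMk (.add ?_ ?_) (.add ?_ ?_) <;>
    exact continuous_finsetSum _ fun i _ => continuous_finsetSum _ fun j _ => by
      split_ifs <;> fun_prop

section BasisBrackets

variable (m : ℂ) (u : CLS) (j k : ℤ)

@[simp] lemma br_L_fst : (br m u (L j)).1 k = C ((u.1 (k - j)).eval (-m)) * (X + C (2 * m)) := by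
  simp only [br, L, Finsupp.sum_single_index, Finsupp.sum_zero_index, Finsupp.sum_fun_zero, sh_zero,
    sh_one, mul_zero, zero_mul, mul_one, Finsupp.single_zero, add_zero, zero_add]
  exact Finsupp.sum_single_add_right_apply _ _ _ (fun f : ℂ[X] => C (f.eval (-m)) * (X + C (2 * m)))
    (by simp)

@[simp] lemma br_L_snd :
    (br m u (L j)).2 k = C ((u.2 (k - j)).eval (-m)) * (C (1 / 2) * X + C (3 / 2 * m)) := by
  simp only [br, L, Finsupp.sum_single_index, Finsupp.sum_zero_index, Finsupp.sum_fun_zero, sh_zero,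
    sh_one, mul_zero, zero_mul, mul_one, Finsupp.single_zero, add_zero, zero_add]
  exact Finsupp.sum_single_add_right_apply _ _ _
    (fun f : ℂ[X] => C (f.eval (-m)) * (C (1 / 2) * X + C (3 / 2 * m))) (by simp)

@[simp] lemma br_G_fst : (br m u (G j)).1 k = C (2 * (u.2 (k - j)).eval (-m)) := by
  simp only [br, G, Finsupp.sum_single_index, Finsupp.sum_zero_index, Finsupp.sum_fun_zero, sh_zero,
    sh_one, mul_zero, zero_mul, mul_one, Finsupp.single_zero, add_zero, zero_add]
  exact Finsupp.sum_single_add_right_apply _ _ _ (fun f : ℂ[X] => C (2 * f.eval (-m))) (by simp)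

@[simp] lemma br_G_snd :
    (br m u (G j)).2 k = C ((u.1 (k - j)).eval (-m)) * (X + C (3 / 2 * m)) := by
  simp only [br, G, Finsupp.sum_single_index, Finsupp.sum_zero_index, Finsupp.sum_fun_zero, sh_zero,
    sh_one, mul_zero, zero_mul, mul_one, Finsupp.single_zero, add_zero, zero_add]
  exact Finsupp.sum_single_add_right_apply _ _ _
    (fun f : ℂ[X] => C (f.eval (-m)) * (X + C (3 / 2 * m))) (by simp)

@[simp] lemma br_L_zero_left_fst : (br m (L 0) u).1 k = sh m (u.1 k) * (X + C (2 * m)) := by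
  simp only [br, L, Finsupp.sum_single_index, Finsupp.sum_zero_index, eval_zero, eval_one, C_0,
    C_1, zero_mul, one_mul, Finsupp.single_zero, Finsupp.sum_fun_zero, add_zero]
  simpa only [sub_zero] using Finsupp.sum_single_add_left_apply u.1 0 k
    (fun g : ℂ[X] => sh m g * (X + C (2 * m))) (by simp [sh_zero])

@[simp] lemma br_L_zero_left_snd : (br m (L 0) u).2 k = sh m (u.2 k) * (X + C (3 / 2 * m)) := by
  simp only [br, L, Finsupp.sum_single_index, Finsupp.sum_zero_index, eval_zero, eval_one, C_0,
    C_1, zero_mul, one_mul, Finsupp.single_zero, Finsupp.sum_fun_zero, add_zero]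
  simpa only [sub_zero] using Finsupp.sum_single_add_left_apply u.2 0 k
    (fun g : ℂ[X] => sh m g * (X + C (3 / 2 * m))) (by simp [sh_zero])

end BasisBrackets

lemma br_L_zero_L (m : ℂ) (j : ℤ) : br m (L 0) (L j) = dC (L j) + (2 * m) • L j := by
  ext k : 2 <;> simp only [br_L_zero_left_fst, br_L_zero_left_snd] <;>
    by_cases h : j = k <;> simp [L, h, sh_one, sh_zero, smul_eq_C_mul]

lemma br_L_zero_G (m : ℂ) (j : ℤ) : br m (L 0) (G j) = dC (G j) + (3 / 2 * m) • G j := by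
  ext k : 2 <;> simp only [br_L_zero_left_fst, br_L_zero_left_snd] <;>
    by_cases h : j = k <;> simp [G, h, sh_one, sh_zero, smul_eq_C_mul]

lemma br_zero_L_zero (u : CLS) : br 0 (L 0) u = dC u := by
  ext k : 2 <;> simp [sh, mul_comm]

lemma jacobi_L_zero_L (x : CLS) (l m : ℂ) (j : ℤ) :
    dC (br l x (L j)) + (l + 2 * m) • br l x (L j)
      = br (l + m) (br l x (L 0)) (L j) + br m (L 0) (br l x (L j)) := by
  ext k : 2 <;> apply Polynomial.funext <;> intro z <;> simp <;> ring

lemma jacobi_L_zero_G (x : CLS) (l m : ℂ) (j : ℤ) :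
    dC (br l x (G j)) + (l + 3 / 2 * m) • br l x (G j)
      = br (l + m) (br l x (L 0)) (G j) + br m (L 0) (br l x (G j)) := by
  ext k : 2 <;> apply Polynomial.funext <;> intro z <;> simp <;> ring

lemma eq_of_leibniz_L_zero {l β : ℂ} (hl : l ≠ 0) (R : ℂ → CLS) {W W' : CLS}
    (hW : ∀ m, dC W + (l + β * m) • W = R m + br m (L 0) W)
    (hW' : ∀ m, dC W' + (l + β * m) • W' = R m + br m (L 0) W') : W = W' := by
  refine Prod.ext (Finsupp.ext fun k => sub_eq_zero.mp ?_) (Finsupp.ext fun k => sub_eq_zero.mp ?_)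
  · refine eq_zero_of_forall_mul_eq_sh_mul (β := β) hl two_ne_zero fun m => ?_
    have h := congrArg (fun u : CLS => u.1 k) (hW m)
    have h' := congrArg (fun u : CLS => u.1 k) (hW' m)
    simp only [Prod.fst_add, Finsupp.add_apply, dC_fst_apply, Prod.smul_fst, Finsupp.smul_apply,
      smul_eq_C_mul, br_L_zero_left_fst] at h h'
    rw [sh_sub]
    linear_combination h - h'
  · refine eq_zero_of_forall_mul_eq_sh_mul (β := β) hl (by norm_num : (3 / 2 : ℂ) ≠ 0) fun m => ?_
    have h := congrArg (fun u : CLS => u.2 k) (hW m)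
    have h' := congrArg (fun u : CLS => u.2 k) (hW' m)
    simp only [Prod.snd_add, Finsupp.add_apply, dC_snd_apply, Prod.smul_snd, Finsupp.smul_apply,
      smul_eq_C_mul, br_L_zero_left_snd] at h h'
    rw [sh_sub]
    linear_combination h - h'

section Derivation

variable (D : ℂ → CLS →ₗ[ℂ] CLS)

lemma map_smul_poly (hdC : ∀ l u, D l (dC u) = dC (D l u) + l • D l u) (l : ℂ) (p : ℂ[X])
    (u : CLS) : D l (p • u) = sh l p • D l u := by
  induction p using Polynomial.induction_on with
  | C a => rw [C_smul, map_smul, sh_C, C_smul]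
  | add p q hp hq =>
    rw [add_smul p q u, map_add, hp, hq, sh_add]
    exact (add_smul _ _ _).symm
  | monomial n a ih =>
    have hX : ∀ w, D l ((X : ℂ[X]) • w) = (X + C l) • D l w := fun w => by
      rw [← dC_eq_X_smul, hdC, dC_eq_X_smul, ← C_smul]
      exact (add_smul _ _ _).symm
    rw [show C a * X ^ (n + 1) = X * (C a * X ^ n) by ring, mul_smul, hX, ih, smul_smul, sh_mul l X,
      sh_X]

lemma leibniz_L_zero_of_br_eq (hdC : ∀ l u, D l (dC u) = dC (D l u) + l • D l u)
    (hL : ∀ l m v, D l (br m (L 0) v) = br (l + m) (D l (L 0)) v + br m (L 0) (D l v))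
    {v : CLS} {β : ℂ} (hv : ∀ m, br m (L 0) v = dC v + (β * m) • v) (l m : ℂ) :
    dC (D l v) + (l + β * m) • D l v = br (l + m) (D l (L 0)) v + br m (L 0) (D l v) := by
  rw [← hL, hv, map_add, map_smul, hdC]
  module

lemma exists_apply_L_zero_eq_br
    (hpoly : ∀ u, ∃ (N : ℕ) (w : ℕ → CLS), ∀ l : ℂ, D l u = ∑ k ∈ Finset.range N, l ^ k • w k)
    (hdC : ∀ l u, D l (dC u) = dC (D l u) + l • D l u)
    (hL : ∀ l m v, D l (br m (L 0) v) = br (l + m) (D l (L 0)) v + br m (L 0) (D l v)) :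
    ∃ x, ∀ l ≠ 0, D l (L 0) = br l x (L 0) := by
  obtain ⟨N, w, hw⟩ := hpoly (L 0)
  obtain ⟨F, hF⟩ := exists_eval_neg_eq (M := CLS)
    (Finsupp.mapRange.linearMap (lcoeff ℂ 1) ∘ₗ LinearMap.fst ℂ _ _) hw
  obtain ⟨H, hH⟩ := exists_eval_neg_eq (M := CLS)
    ((2 : ℂ) • Finsupp.mapRange.linearMap (lcoeff ℂ 1) ∘ₗ LinearMap.snd ℂ _ _) hw
  refine ⟨(F, H), fun l hl => ?_⟩
  have key : l • D l (L 0) = br l (D l (L 0)) (L 0) := by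
    have h := leibniz_L_zero_of_br_eq D hdC hL (br_L_zero_L · 0) l 0
    rw [br_zero_L_zero, mul_zero, add_zero, add_comm _ (dC _)] at h
    exact add_left_cancel h
  refine Prod.ext (Finsupp.ext fun k => ?_) (Finsupp.ext fun k => ?_)
  · have hk := congrArg (fun u : CLS => u.1 k) key
    simp only [Prod.smul_fst, Finsupp.smul_apply, smul_eq_C_mul, br_L_fst, sub_zero] at hk
    rw [br_L_fst, sub_zero, hF]
    simpa using eq_C_coeff_one_div_mul hl (by simp) hk
  · have hk := congrArg (fun u : CLS => u.2 k) key
    simp only [Prod.smul_snd, Finsupp.smul_apply, smul_eq_C_mul, br_L_snd, sub_zero] at hk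
    rw [br_L_snd, sub_zero, hH]
    convert eq_C_coeff_one_div_mul hl (by simp) hk using 3
    simp
    ring

lemma apply_eq_br_of_ne_zero (hdC : ∀ l u, D l (dC u) = dC (D l u) + l • D l u)
    (hL : ∀ l m v, D l (br m (L 0) v) = br (l + m) (D l (L 0)) v + br m (L 0) (D l v))
    {x : CLS} {l : ℂ} (hl : l ≠ 0) (hx : D l (L 0) = br l x (L 0)) (v : CLS) :
    D l v = br l x v := by
  have hLj : ∀ j, D l (L j) = br l x (L j) := fun j =>
    eq_of_leibniz_L_zero hl (fun m => br (l + m) (D l (L 0)) (L j))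
      (leibniz_L_zero_of_br_eq D hdC hL (br_L_zero_L · j) l)
      (fun m => by simp only [hx]; exact jacobi_L_zero_L x l m j)
  have hGj : ∀ j, D l (G j) = br l x (G j) := fun j =>
    eq_of_leibniz_L_zero hl (fun m => br (l + m) (D l (L 0)) (G j))
      (leibniz_L_zero_of_br_eq D hdC hL (br_L_zero_G · j) l)
      (fun m => by simp only [hx]; exact jacobi_L_zero_G x l m j)
  refine induction_on (S := fun v => D l v = br l x v) (fun u w hu hw => ?_) (fun p u hu => ?_)
    hLj hGj v
  · rw [map_add, br_add_right, hu, hw]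
  · rw [map_smul_poly D hdC, br_smul_right, hu]

theorem exists_apply_eq_br
    (hpoly : ∀ u, ∃ (N : ℕ) (w : ℕ → CLS), ∀ l : ℂ, D l u = ∑ k ∈ Finset.range N, l ^ k • w k)
    (hdC : ∀ l u, D l (dC u) = dC (D l u) + l • D l u)
    (hL : ∀ l m v, D l (br m (L 0) v) = br (l + m) (D l (L 0)) v + br m (L 0) (D l v)) :
    ∃ x, ∀ l u, D l u = br l x u := by
  obtain ⟨x, hx⟩ := exists_apply_L_zero_eq_br D hpoly hdC hL
  refine ⟨x, fun l u => eq_of_forall_ne_zero (f := (D · u)) (g := (br · x u)) (fun k z => ?_)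
    (fun k z => continuous_coord_br x u k z)
    (fun l hl => apply_eq_br_of_ne_zero D hdC hL hl (hx l hl) u) l⟩
  obtain ⟨N, w, hw⟩ := hpoly u
  exact continuous_coord_of_eq_sum hw k z

end Derivation

end CLS

theorem IsEvenCDer.exists_apply_eq_br {D : ℂ → CLS →ₗ[ℂ] CLS} (h : IsEvenCDer D) :
    ∃ x, ∀ l u, D l u = br l x u :=
  CLS.exists_apply_eq_br D h.2.1 h.2.2.1 fun l m v => h.2.2.2 l m (CLS.L 0) v

theorem IsOddCDer.exists_apply_eq_br {D : ℂ → CLS →ₗ[ℂ] CLS} (h : IsOddCDer D) :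
    ∃ x, ∀ l u, D l u = br l x u :=
  CLS.exists_apply_eq_br D h.2.1 h.2.2.1 fun l m v => (h.2.2.2 l m (CLS.L 0) v).1 rfl

/-- every conformal superderivation of `𝔠𝔩𝔰` is inner,
`CDer(𝔠𝔩𝔰) = CInn(𝔠𝔩𝔰)`: any sum of an even and an odd conformal superderivation is
`ad_x` for some `x ∈ 𝔠𝔩𝔰`. -/
theorem stmt15 (D₀ D₁ : ℂ → CLS →ₗ[ℂ] CLS)
    (h₀ : IsEvenCDer D₀) (h₁ : IsOddCDer D₁) :
    ∃ x : CLS, ∀ (l : ℂ) (u : CLS), D₀ l u + D₁ l u = br l x u := by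
  obtain ⟨x₀, hx₀⟩ := h₀.exists_apply_eq_br
  obtain ⟨x₁, hx₁⟩ := h₁.exists_apply_eq_br
  exact ⟨x₀ + x₁, fun l u => by rw [hx₀, hx₁, CLS.br_add_left]⟩
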